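/- arXiv:1210.7031 — 4 statements merged into one kernel-verified Lean document; each statement's English description precedes it below -/
import Mathlib

section
/- The matrix a = −(1/2)(I + ω·S) ∈ M_2(W) satisfies a³ = I and a ≠ I, and det(a) = 1. Hence a is an element of exact order 3 in the Morava stabilizer group 𝕊₂ = 𝒪₂ˣ (in particular 𝕊₂ contains an element of order 3). -/
/-!
The element `N = ι(ω₀)·S` squares to `3·ω₀·σ(ω₀) = 3·ω₀⁴ = -3`, so `a = -(1 + N)/2` is a root
of `X² + X + 1`. Hence `a³ = 1`, and `a ≠ 1` because `3 ≠ 0` in `W`. Moreover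
`det (1 + N) = 1 - 3·ω₀·σ(ω₀) = 4`, so `det a = 1`, and `a` lies in `𝒪₂` because `1/2` is fixed
by `σ`.
-/

open Matrix

/-- `𝔽₉`, the field with nine elements. -/
abbrev F9 : Type := GaloisField 3 2

/-- `W = 𝕎(𝔽₉)`, the ring of Witt vectors of `𝔽₉`. -/
abbrev Wq : Type := WittVector 3 F9

/-- `σ`, the Frobenius automorphism of `W = 𝕎(𝔽₉)`. -/
noncomputable def σW : Wq ≃+* Wq := WittVector.frobeniusEquiv 3 F9

/-- `ι : W → M₂(W)`, `ι(x) = diag(x, σ(x))`. -/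
noncomputable def iw (x : Wq) : Matrix (Fin 2) (Fin 2) Wq := !![x, 0; 0, σW x]

/-- The matrix `S` with rows `(0, 3)` and `(1, 0)`. -/
noncomputable def Sm : Matrix (Fin 2) (Fin 2) Wq := !![0, 3; 1, 0]

/-- `𝒪₂ = {ι(x) + ι(y)·S : x, y ∈ W} ⊆ M₂(W)`. -/
noncomputable def O2 : Set (Matrix (Fin 2) (Fin 2) Wq) :=
  {A | ∃ x y : Wq, A = iw x + iw y * Sm}

section CubeRoot

variable {A : Type*} [Ring A] {a : A}

theorem sq_add_self_add_one_eq_zero_of_sq_eq_neg_three {R : Type*} [CommRing R] [Algebra R A]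
    [Invertible (2 : R)] {N : A} (hN : N ^ 2 = -3) :
    (-(⅟(2 : R) • (1 + N))) ^ 2 + -(⅟(2 : R) • (1 + N)) + 1 = 0 := by
  have h2 : (2 : R) * ⅟2 = 1 := mul_invOf_self 2
  -- `module` does not identify the numeral `(3 : A)` with `(3 : R) • 1`, so do it by hand.
  have hN' : N * N = -((3 : R) • 1) := by
    rw [← sq, hN, ← map_ofNat (algebraMap R A), Algebra.algebraMap_eq_smul_one]
  have hsq : (1 + N) ^ 2 = (2 : R) • (N - 1) := by
    rw [sq, add_mul, one_mul, mul_add, mul_one, hN']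
    module
  rw [neg_sq, smul_pow, hsq]
  linear_combination (norm := module) h2 • (⅟(2 : R) • N - (⅟(2 : R) + 1) • (1 : A))

theorem pow_three_eq_one_of_sq_add_self_add_one_eq_zero (ha : a ^ 2 + a + 1 = 0) : a ^ 3 = 1 := by
  rw [show a ^ 3 = (a - 1) * (a ^ 2 + a + 1) + 1 by noncomm_ring, ha, mul_zero, zero_add]

theorem ne_one_of_sq_add_self_add_one_eq_zero (h3 : (3 : A) ≠ 0) (ha : a ^ 2 + a + 1 = 0) :
    a ≠ 1 := by
  rintro rfl
  exact h3 (by rw [← ha]; norm_num)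

end CubeRoot

theorem iw_one : iw 1 = 1 := by
  rw [iw, map_one, one_fin_two]

theorem smul_iw {r : Wq} (hr : σW r = r) (x : Wq) : r • iw x = iw (r * x) := by
  rw [iw, iw, smul_of]
  simp [hr]

theorem iw_mul_Sm (x : Wq) : iw x * Sm = !![0, 3 * x; σW x, 0] := by
  simp [iw, Sm, mul_comm]

theorem iw_mul_Sm_sq (x : Wq) :
    (iw x * Sm) ^ 2 = (3 * (x * σW x)) • (1 : Matrix (Fin 2) (Fin 2) Wq) := by
  rw [iw_mul_Sm, sq, mul_fin_two, one_fin_two, smul_of]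
  congr 1
  ext i j : 2
  fin_cases i <;> fin_cases j <;> simp <;> ring

theorem det_one_add_iw_mul_Sm (x : Wq) : (1 + iw x * Sm).det = 1 - 3 * (x * σW x) := by
  simp [det_fin_two, iw_mul_Sm]
  ring

theorem smul_mem_O2 {r : Wq} (hr : σW r = r) {M : Matrix (Fin 2) (Fin 2) Wq} (hM : M ∈ O2) :
    r • M ∈ O2 := by
  obtain ⟨x, y, rfl⟩ := hM
  exact ⟨r * x, r * y, by rw [smul_add, ← smul_mul_assoc, smul_iw hr, smul_iw hr]⟩

theorem σW_invOf_two [Invertible (2 : Wq)] : σW (⅟2) = ⅟2 := by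
  have h := congrArg σW (invOf_mul_self (2 : Wq))
  rw [map_mul, map_one, map_ofNat] at h
  exact (invOf_eq_left_inv h).symm

theorem matrix_three_ne_zero : (3 : Matrix (Fin 2) (Fin 2) Wq) ≠ 0 := fun h =>
  WittVector.p_nonzero 3 F9 (by simpa [ofNat_apply] using congrFun₂ h 0 0)

/-- with `ω₀ ∈ W` a primitive 8th root of unity satisfying `ω₀⁴ = −1`
and `σ(ω₀) = ω₀³`, and `a = −(1/2)(I + ι(ω₀)·S)`, the matrix `a` satisfies `a³ = I`,
`a ≠ I` and `det a = 1`; hence `a` is an element of exact order `3` in the Morava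
stabilizer group `𝕊₂ = 𝒪₂ˣ`. -/
theorem statement1 [Invertible (2 : Wq)]
    (ω₀ : Wq) (hω₀ : ω₀ ^ 4 = -1) (hσω₀ : σW ω₀ = ω₀ ^ 3)
    (a : Matrix (Fin 2) (Fin 2) Wq)
    (ha : a = -((⅟ (2 : Wq)) • ((1 : Matrix (Fin 2) (Fin 2) Wq) + iw ω₀ * Sm))) :
    a ^ 3 = 1 ∧ a ≠ 1 ∧ a.det = 1 ∧
    a ∈ O2 ∧ IsUnit a ∧ orderOf a = 3 := by
  have hnorm : ω₀ * σW ω₀ = -1 := by rw [hσω₀, ← pow_succ', hω₀]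
  have hN : (iw ω₀ * Sm) ^ 2 = -3 := by
    rw [iw_mul_Sm_sq, hnorm, mul_neg_one, neg_smul, ← Algebra.algebraMap_eq_smul_one, map_ofNat]
  have hroot : a ^ 2 + a + 1 = 0 := ha ▸ sq_add_self_add_one_eq_zero_of_sq_eq_neg_three hN
  have hcube : a ^ 3 = 1 := pow_three_eq_one_of_sq_add_self_add_one_eq_zero hroot
  have hne : a ≠ 1 := ne_one_of_sq_add_self_add_one_eq_zero matrix_three_ne_zero hroot
  refine ⟨hcube, hne, ?_, ?_, IsUnit.of_pow_eq_one hcube three_ne_zero, orderOf_eq_prime hcube hne⟩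
  · rw [ha, det_neg, det_smul, det_one_add_iw_mul_Sm, hnorm, Fintype.card_fin]
    linear_combination (⅟2 * 2 + 1 : Wq) * invOf_mul_self (2 : Wq)
  · rw [ha, ← neg_one_smul Wq]
    exact smul_mem_O2 (by rw [map_neg, map_one])
      (smul_mem_O2 σW_invOf_two ⟨1, ω₀, by rw [iw_one]⟩)
end

section
/- The matrix ω = ι(ω₀) has exact multiplicative order 8 in GL_2(W), and conjugation by ω² inverts a: ω²·a·ω⁻² = a⁻¹ = a². (Thus ω² normalizes the order-3 subgroup generated by a and acts on it nontrivially.) -/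
open Matrix

private lemma add_fin2 {α : Type*} [Add α] (a b c d e f g h : α) :
    !![a, b; c, d] + !![e, f; g, h] = !![a + e, b + f; c + g, d + h] := by
  ext i j; fin_cases i <;> fin_cases j <;> rfl

private lemma smul_fin2 {α : Type*} [Mul α] (r a b c d : α) :
    r • !![a, b; c, d] = !![r * a, r * b; r * c, r * d] := by
  ext i j; fin_cases i <;> fin_cases j <;> rfl

private lemma neg_fin2 {α : Type*} [Neg α] (a b c d : α) :
    -!![a, b; c, d] = !![-a, -b; -c, -d] := by
  ext i j; fin_cases i <;> fin_cases j <;> rfl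

private lemma fin2_eq {α : Type*} {a b c d e f g h : α}
    (h1 : a = e) (h2 : b = f) (h3 : c = g) (h4 : d = h) :
    !![a, b; c, d] = !![e, f; g, h] := by
  subst h1 h2 h3 h4; rfl

set_option maxHeartbeats 1000000 in
/-- the matrix `ω = ι(ω₀)` has exact multiplicative order `8` in
`GL₂(W)`, and conjugation by `ω²` inverts `a`: `ω²·a·ω⁻² = a⁻¹ = a²`. -/
theorem statement2 [Invertible (2 : Wq)]
    (ω₀ : Wq) (hω₀ : ω₀ ^ 4 = -1) (hσω₀ : σW ω₀ = ω₀ ^ 3)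
    (ω : Matrix (Fin 2) (Fin 2) Wq) (hω : ω = iw ω₀)
    (a : Matrix (Fin 2) (Fin 2) Wq)
    (ha : a = -((⅟ (2 : Wq)) • ((1 : Matrix (Fin 2) (Fin 2) Wq) + iw ω₀ * Sm))) :
    IsUnit ω ∧ orderOf ω = 8 ∧
    ω ^ 2 * a * (ω ^ 2)⁻¹ = a⁻¹ ∧ a⁻¹ = a ^ 2 := by
  have h2 : (2 : Wq) ≠ 0 := (isUnit_of_invertible (2:Wq)).ne_zero
  set c : Wq := ⅟(2:Wq) with hcdef
  have hc : c * 2 = 1 := invOf_mul_self 2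
  have hωm : ω = !![ω₀, 0; 0, ω₀^3] := by rw [hω, iw, hσω₀]
  have ham : a = !![-c, -(3*(c*ω₀)); -(c*ω₀^3), -c] := by
    rw [ha, iw, hσω₀, Sm, Matrix.mul_fin_two, Matrix.one_fin_two,
      add_fin2, smul_fin2, neg_fin2]
    exact fin2_eq (by ring) (by ring) (by ring) (by ring)
  have hω2 : ω^2 = !![ω₀^2, 0; 0, -(ω₀^2)] := by
    rw [hωm, pow_two, Matrix.mul_fin_two]
    exact fin2_eq (by ring) (by ring) (by ring) (by linear_combination ω₀^2 * hω₀)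
  have hω4 : ω^4 = -1 := by
    rw [show (4:ℕ) = 2*2 from rfl, pow_mul, hω2, pow_two, Matrix.mul_fin_two,
      show (-1 : Matrix (Fin 2) (Fin 2) Wq) = !![-1,-0;-0,-1] from by
        rw [Matrix.one_fin_two, neg_fin2]]
    exact fin2_eq (by linear_combination hω₀) (by ring) (by ring)
      (by linear_combination hω₀)
  have hω8 : ω^8 = 1 := by
    rw [show (8:ℕ) = 4*2 from rfl, pow_mul, hω4, pow_two]
    simp
  have hω4ne : ¬ ω^4 = 1 := by
    rw [hω4]
    intro h
    have h00 := congrFun (congrFun h 0) 0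
    simp [Matrix.one_apply, Matrix.neg_apply] at h00
    exact h2 (by linear_combination -h00)
  have hunit : IsUnit ω := IsUnit.of_pow_eq_one hω8 (by norm_num)
  have ha2 : a^2 = !![-c, 3*(c*ω₀); c*ω₀^3, -c] := by
    rw [pow_two, ham, Matrix.mul_fin_two]
    exact fin2_eq (by linear_combination 3*c*c * hω₀ + (-c) * hc)
      (by linear_combination (3*c*ω₀) * hc)
      (by linear_combination (c*ω₀^3) * hc)
      (by linear_combination 3*c*c * hω₀ + (-c) * hc)
  have ha3 : a * a^2 = 1 := by
    rw [ha2, ham, Matrix.mul_fin_two, Matrix.one_fin_two]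
    exact fin2_eq (by linear_combination (-3*c*c) * hω₀ + (2*c+1) * hc)
      (by ring) (by ring)
      (by linear_combination (-3*c*c) * hω₀ + (2*c+1) * hc)
  have hainv : a⁻¹ = a^2 := Matrix.inv_eq_right_inv ha3
  have hω2inv : (ω^2)⁻¹ = !![ω₀^6, 0; 0, -(ω₀^6)] := by
    apply Matrix.inv_eq_right_inv
    rw [hω2, Matrix.mul_fin_two, Matrix.one_fin_two]
    exact fin2_eq (by linear_combination (ω₀^4 - 1) * hω₀) (by ring) (by ring)
      (by linear_combination (ω₀^4 - 1) * hω₀)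
  refine ⟨hunit, ?_, ?_, hainv⟩
  · have := orderOf_eq_prime_pow (x := ω) (p := 2) (n := 2) hω4ne hω8
    norm_num at this
    exact this
  · rw [hainv, hω2inv, hω2, ha2, ham, Matrix.mul_fin_two, Matrix.mul_fin_two]
    exact fin2_eq (by linear_combination (-c*(ω₀^4-1)) * hω₀)
      (by linear_combination (3*c*ω₀*(ω₀^4-1)) * hω₀)
      (by linear_combination (c*ω₀^3*(ω₀^4-1)) * hω₀)
      (by linear_combination (-c*(ω₀^4-1)) * hω₀)
end

section
/- In the group G = GL_2(W) ⋊ C₂, the element ωφ (i.e. the product of (ω,1) and (I,φ)) satisfies (ωφ)² = (ω⁴, 1) = (−I, 1), and ωφ commutes with a; equivalently, in M_2(W) one has ω·φ(a)·ω⁻¹ = a, where φ(a) denotes the entrywise application of σ to a. (Thus ωφ acts trivially on the subgroup generated by a.) -/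
open Matrix

/-- `φ`, the ring automorphism of `M₂(W)` applying `σ` to each matrix entry. -/
noncomputable def φM : Matrix (Fin 2) (Fin 2) Wq ≃+* Matrix (Fin 2) (Fin 2) Wq :=
  σW.mapMatrix

/-- The cyclic group of order two. -/
abbrev C2 : Type := Multiplicative (ZMod 2)

/-! Write `ω = ι(ω₀)`. From `σ ω₀ = ω₀³` we get `φ(ω) = ω³`, and since `σ² ω₀ = ω₀⁹ = ω₀` also
`S ω = ω³ S`. Hence `(ωφ)² = ω φ(ω) = ω⁴ = ι(ω₀⁴) = −1`, and `ω φ(a) = a ω` because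
`ω φ(1 + ωS) = ω + ω⁴S = (1 + ωS) ω`. -/

namespace Matrix

variable {R : Type*} [CommRing R]

/-- `x ↦ diag(x, σ x)`; for the Frobenius of `𝕎(𝔽₉)` this is the embedding `ι` of `W` in `𝒪₂`. -/
def twistedDiagonal (σ : R →+* R) : R →+* Matrix (Fin 2) (Fin 2) R where
  toFun x := !![x, 0; 0, σ x]
  map_one' := by simp [one_fin_two]
  map_mul' x y := by simp
  map_zero' := by ext i j; fin_cases i <;> fin_cases j <;> simp
  map_add' x y := by ext i j; fin_cases i <;> fin_cases j <;> simp

theorem twistedDiagonal_apply (σ : R →+* R) (x : R) :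
    twistedDiagonal σ x = !![x, 0; 0, σ x] := rfl

theorem mapMatrix_twistedDiagonal (σ : R ≃+* R) (x : R) :
    σ.mapMatrix (twistedDiagonal σ x) = twistedDiagonal σ (σ x) := by
  ext i j; fin_cases i <;> fin_cases j <;> simp [twistedDiagonal_apply]

theorem antidiagonal_mul_twistedDiagonal (σ : R →+* R) (c : R) {x : R} (hx : σ (σ x) = x) :
    !![0, c; 1, 0] * twistedDiagonal σ x = twistedDiagonal σ (σ x) * !![0, c; 1, 0] := by
  simp [twistedDiagonal_apply, hx, mul_comm]

/-- An eighth root of unity `ω₀` with `σ ω₀ = ω₀ ^ 3` is fixed by `σ²`, as `ω₀ ^ 9 = ω₀`. -/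
theorem antidiagonal_mul_twistedDiagonal_of_pow_four_eq_neg_one (σ : R ≃+* R) (c : R) {ω₀ : R}
    (hω₀ : ω₀ ^ 4 = -1) (hσω₀ : σ ω₀ = ω₀ ^ 3) :
    !![0, c; 1, 0] * twistedDiagonal σ ω₀ =
      σ.mapMatrix (twistedDiagonal σ ω₀) * !![0, c; 1, 0] := by
  have hσσω₀ : σ (σ ω₀) = ω₀ := by
    rw [hσω₀, map_pow, hσω₀, ← pow_mul]
    linear_combination (ω₀ ^ 5 - ω₀) * hω₀
  rw [mapMatrix_twistedDiagonal]
  exact antidiagonal_mul_twistedDiagonal _ c hσσω₀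

end Matrix

/-- Both sides expand to `w + w (f w) s`. -/
theorem mul_map_one_add_mul_eq {A F : Type*} [Ring A] [FunLike F A A] [RingHomClass F A A]
    (f : F) {w s : A} (hs : f s = s) (hw : s * w = f w * s) :
    w * f (1 + w * s) = (1 + w * s) * w := by
  simp only [map_add, map_one, map_mul, hs, mul_add, add_mul, mul_one, one_mul, mul_assoc, hw]

theorem map_invOf_two {R S F : Type*} [Semiring R] [Semiring S] [FunLike F R S]
    [RingHomClass F R S] (f : F) [Invertible (2 : R)] [Invertible (2 : S)] : f (⅟ 2) = ⅟ 2 := by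
  have h : 2 * f (⅟ 2) = 1 := by rw [← map_ofNat f 2, ← map_mul, mul_invOf_self, map_one]
  exact (invOf_eq_right_inv h).symm

namespace SemidirectProduct

variable {N G : Type*} [Group N] [Group G] {θ : G →* MulAut N}

theorem inl_mul_inr_sq {g : G} (hg : g * g = 1) (n : N) :
    (inl n * inr g : N ⋊[θ] G) ^ 2 = inl (n * θ g n) := by
  ext <;> simp [pow_two, hg]

theorem inl_mul_inr_mul_inl_comm (g : G) {n m : N} (h : n * θ g m = m * n) :
    (inl n * inr g : N ⋊[θ] G) * inl m = inl m * (inl n * inr g) := by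
  ext <;> simp [h, mul_assoc]

end SemidirectProduct

/-- in the semidirect product `G = GL₂(W) ⋊ C₂` (the nontrivial element
of `C₂` acting by entrywise Frobenius `φ`), the element `ωφ` satisfies
`(ωφ)² = (ω⁴, 1) = (−I, 1)` and `ωφ` commutes with `a`; equivalently, in `M₂(W)`,
`ω·φ(a)·ω⁻¹ = a`. -/
theorem statement3 [Invertible (2 : Wq)]
    (ω₀ : Wq) (hω₀ : ω₀ ^ 4 = -1) (hσω₀ : σW ω₀ = ω₀ ^ 3)
    (θ : C2 →* MulAut (GL (Fin 2) Wq))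
    (hθ : θ (Multiplicative.ofAdd 1) = Units.mapEquiv φM.toMulEquiv)
    (ωu au : GL (Fin 2) Wq) (hωu : (ωu : Matrix (Fin 2) (Fin 2) Wq) = iw ω₀)
    (hau : (au : Matrix (Fin 2) (Fin 2) Wq)
      = -((⅟ (2 : Wq)) • ((1 : Matrix (Fin 2) (Fin 2) Wq) + iw ω₀ * Sm))) :
    (SemidirectProduct.inl ωu * SemidirectProduct.inr (Multiplicative.ofAdd 1)
        : GL (Fin 2) Wq ⋊[θ] C2) ^ 2
      = SemidirectProduct.inl (ωu ^ 4) ∧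
    ωu ^ 4 = (-1 : GL (Fin 2) Wq) ∧
    (SemidirectProduct.inl ωu * SemidirectProduct.inr (Multiplicative.ofAdd 1)
        : GL (Fin 2) Wq ⋊[θ] C2) * SemidirectProduct.inl au
      = SemidirectProduct.inl au *
        (SemidirectProduct.inl ωu * SemidirectProduct.inr (Multiplicative.ofAdd 1)) ∧
    (ωu : Matrix (Fin 2) (Fin 2) Wq) * φM (au : Matrix (Fin 2) (Fin 2) Wq) *
        (ωu : Matrix (Fin 2) (Fin 2) Wq)⁻¹
      = (au : Matrix (Fin 2) (Fin 2) Wq) := by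
  have hiw : ∀ x, iw x = Matrix.twistedDiagonal (σW : Wq →+* Wq) x := fun _ => rfl
  have hφω : φM (ωu : Matrix (Fin 2) (Fin 2) Wq) = ωu ^ 3 := by
    rw [hωu, hiw, φM, Matrix.mapMatrix_twistedDiagonal, hσω₀, map_pow]
  have hSω : Sm * ωu = φM ωu * Sm := by
    rw [hωu, hiw]
    exact Matrix.antidiagonal_mul_twistedDiagonal_of_pow_four_eq_neg_one σW 3 hω₀ hσω₀
  have hφS : φM Sm = Sm := by
    ext i j : 1; fin_cases i <;> fin_cases j <;> simp [φM, Sm, map_ofNat]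
  have hcomm : (ωu : Matrix (Fin 2) (Fin 2) Wq) * φM au = au * ωu := by
    have hφa : φM au = -(⅟ (2 : Wq) • φM (1 + ωu * Sm)) := by
      rw [hau, ← hωu, map_neg, φM, RingEquiv.mapMatrix_apply, RingEquiv.mapMatrix_apply,
        Matrix.map_smul' _ _ _ (map_mul σW), map_invOf_two]
    rw [hφa, hau, ← hωu, mul_neg, neg_mul, Matrix.mul_smul, Matrix.smul_mul,
      mul_map_one_add_mul_eq φM hφS hSω]
  have hθω : θ (Multiplicative.ofAdd 1) ωu = ωu ^ 3 := by
    rw [hθ]; ext : 1; simpa using hφω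
  have hθa : ωu * θ (Multiplicative.ofAdd 1) au = au * ωu := by
    rw [hθ]; ext : 1; simpa using hcomm
  have hω4 : ωu ^ 4 = -1 := by
    ext : 1
    simp [hωu, hiw, ← map_pow, hω₀]
  refine ⟨?_, hω4, SemidirectProduct.inl_mul_inr_mul_inl_comm _ hθa, ?_⟩
  · rw [SemidirectProduct.inl_mul_inr_sq (by decide), hθω, ← pow_succ']
  · rw [hcomm, ← Matrix.coe_units_inv, Units.mul_inv_cancel_right]
end

section
/- In the group G = GL_2(W) ⋊ C₂, the elements ω and φ satisfy ω⁸ = 1, φ² = 1 and φ·ω·φ⁻¹ = ω³, and the subgroup of G generated by ω and φ has exactly 16 elements; that is, ⟨ω, φ⟩ is isomorphic to the semidihedral group SD₁₆ of order 16 (the group with presentation ⟨r, s | r⁸ = s² = 1, s r s⁻¹ = r³⟩). -/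
open Matrix

/-- The defining relations of the semidihedral group `SD₁₆`:
`⟨r, s | r⁸ = s² = 1, s r s⁻¹ = r³⟩`, with `r` the generator `0` and `s` the
generator `1`. -/
def sdRels : Set (FreeGroup (Fin 2)) :=
  {FreeGroup.of 0 ^ 8, FreeGroup.of 1 ^ 2,
   FreeGroup.of 1 * FreeGroup.of 0 * (FreeGroup.of 1)⁻¹ * (FreeGroup.of 0 ^ 3)⁻¹}

/-!
The element `φ` conjugates `ω = ι(ω₀)` to `ι(σ ω₀) = ι(ω₀³) = ω³`, and `φ² = 1`, so `φ` normalizes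
`⟨ω⟩` and `⟨ω, φ⟩ = ⟨ω⟩⟨φ⟩` has at most `8 · 2` elements; the same bound holds for the presented
group `SD₁₆` itself. Since `ι` is injective and multiplicative and `ω₀⁴ = -1 ≠ 1`, `ω` has order
`8`; and `φ ∉ ⟨ω⟩ ≤ GL₂(W)`, so `⟨ω⟩` has index at least `2` in `⟨ω, φ⟩`, which therefore has
exactly `16` elements. The canonical surjection `SD₁₆ → ⟨ω, φ⟩` is then a bijection.
-/

open Subgroup
open scoped Pointwise

lemma Subgroup.two_mul_card_le_card_of_lt {G : Type*} [Group G] {K H : Subgroup G} [Finite H]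
    (h : K < H) : 2 * Nat.card K ≤ Nat.card H := by
  obtain ⟨k, hk⟩ := card_dvd_of_le h.le
  have hk0 : k ≠ 0 := by rintro rfl; simp [Nat.card_ne_zero.mpr ⟨inferInstance, ‹_›⟩] at hk
  have hk1 : k ≠ 1 := by
    rintro rfl
    exact h.ne (eq_of_le_of_card_ge h.le (by rw [hk, mul_one]))
  rw [hk, mul_comm]
  gcongr
  omega

lemma PresentedGroup.range_toGroup {α G : Type*} [Group G] {rels : Set (FreeGroup α)}
    {f : α → G} (h : ∀ x ∈ rels, FreeGroup.lift f x = 1) :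
    (toGroup h).range = Subgroup.closure (Set.range f) := by
  rw [MonoidHom.range_eq_map, ← closure_range_of, MonoidHom.map_closure, ← Set.range_comp]
  exact congrArg (Subgroup.closure ∘ Set.range) (funext fun _ => toGroup.of h)

section ClosurePair

variable {G : Type*} [Group G] {r s : G}

lemma mem_normalizer_zpowers_of_conj_mem (h : s * r * s⁻¹ ∈ zpowers r)
    (h' : s⁻¹ * r * s ∈ zpowers r) : s ∈ normalizer (zpowers r : Set G) := by
  refine mem_normalizer_iff.mpr fun x => ⟨?_, fun hx => ?_⟩
  · rintro ⟨n, rfl⟩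
    simpa only [← conj_zpow] using zpow_mem h n
  · obtain ⟨n, hn⟩ := mem_zpowers_iff.mp hx
    have hx : x = (s⁻¹ * r * s⁻¹⁻¹) ^ n := by rw [conj_zpow, hn]; group
    rw [inv_inv] at hx
    exact hx ▸ zpow_mem h' n

lemma coe_closure_pair_eq_zpowers_mul (h : s ∈ normalizer (zpowers r : Set G)) :
    (closure {r, s} : Set G) = (zpowers r : Set G) * zpowers s := by
  rw [Set.insert_eq, Subgroup.closure_union, ← zpowers_eq_closure, ← zpowers_eq_closure,
    coe_mul_of_right_le_normalizer_left _ _ (zpowers_le.mpr h)]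

lemma finite_closure_pair_of_mem_normalizer (h : s ∈ normalizer (zpowers r : Set G))
    (hr : IsOfFinOrder r) (hs : IsOfFinOrder s) : Finite (closure {r, s}) := by
  have := (finite_zpowers.mpr hr).mul (finite_zpowers.mpr hs)
  rw [← coe_closure_pair_eq_zpowers_mul h] at this
  exact this.to_subtype

lemma card_closure_pair_le_of_mem_normalizer (h : s ∈ normalizer (zpowers r : Set G)) :
    Nat.card (closure {r, s}) ≤ orderOf r * orderOf s := by
  have := Set.natCard_mul_le (s := (zpowers r : Set G)) (t := zpowers s)
  rw [← coe_closure_pair_eq_zpowers_mul h] at this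
  simpa [Nat.card_zpowers] using this

lemma mem_normalizer_zpowers_of_semidihedral (hs : s ^ 2 = 1) (hsr : s * r * s⁻¹ = r ^ 3) :
    s ∈ normalizer (zpowers r : Set G) := by
  have hinv : s⁻¹ = s := inv_eq_of_mul_eq_one_right (by rw [← sq, hs])
  have hconj : s * r * s⁻¹ ∈ zpowers r := hsr ▸ npow_mem_zpowers r 3
  exact mem_normalizer_zpowers_of_conj_mem hconj (by rw [hinv]; rwa [hinv] at hconj)

lemma finite_closure_of_semidihedral (hr : r ^ 8 = 1) (hs : s ^ 2 = 1)
    (hsr : s * r * s⁻¹ = r ^ 3) : Finite (closure {r, s}) :=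
  finite_closure_pair_of_mem_normalizer (mem_normalizer_zpowers_of_semidihedral hs hsr)
    (isOfFinOrder_iff_pow_eq_one.mpr ⟨8, by norm_num, hr⟩)
    (isOfFinOrder_iff_pow_eq_one.mpr ⟨2, by norm_num, hs⟩)

lemma card_closure_le_of_semidihedral (hr : r ^ 8 = 1) (hs : s ^ 2 = 1)
    (hsr : s * r * s⁻¹ = r ^ 3) : Nat.card (closure {r, s}) ≤ 16 :=
  calc Nat.card (closure {r, s})
      ≤ orderOf r * orderOf s :=
        card_closure_pair_le_of_mem_normalizer (mem_normalizer_zpowers_of_semidihedral hs hsr)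
    _ ≤ 8 * 2 := Nat.mul_le_mul (orderOf_le_of_pow_eq_one (by norm_num) hr)
        (orderOf_le_of_pow_eq_one (by norm_num) hs)

lemma sixteen_le_card_closure [Finite (closure {r, s})] (hr : orderOf r = 8)
    (hs : s ∉ zpowers r) : 16 ≤ Nat.card (closure {r, s}) := by
  have hlt : zpowers r < closure {r, s} := by
    refine lt_of_le_of_ne (zpowers_le.mpr (subset_closure (by simp))) fun h => hs ?_
    exact h ▸ subset_closure (by simp)
  have := two_mul_card_le_card_of_lt hlt
  rwa [Nat.card_zpowers, hr] at this

lemma lift_eq_one_of_mem_sdRels_iff :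
    (∀ x ∈ sdRels, FreeGroup.lift ![r, s] x = 1) ↔
      r ^ 8 = 1 ∧ s ^ 2 = 1 ∧ s * r * s⁻¹ = r ^ 3 := by
  simp [sdRels, mul_inv_eq_one]

end ClosurePair

namespace PresentedGroup

lemma of_sdRels :
    (of 0 : PresentedGroup sdRels) ^ 8 = 1 ∧ (of 1 : PresentedGroup sdRels) ^ 2 = 1 ∧
      of 1 * of 0 * (of 1)⁻¹ = (of 0 : PresentedGroup sdRels) ^ 3 := by
  refine lift_eq_one_of_mem_sdRels_iff.mp fun x hx => ?_
  have : FreeGroup.lift ![of 0, of 1] = mk sdRels := by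
    ext i
    fin_cases i <;> rfl
  rw [this]
  exact one_of_mem hx

lemma closure_pair_of_sdRels :
    Subgroup.closure {(of 0 : PresentedGroup sdRels), of 1} = ⊤ := by
  rw [← closure_range_of]
  congr 1
  ext
  simp [Fin.exists_fin_two, eq_comm]

instance : Finite (PresentedGroup sdRels) := by
  obtain ⟨h8, h2, h3⟩ := of_sdRels
  have := finite_closure_of_semidihedral h8 h2 h3
  rw [closure_pair_of_sdRels] at this
  exact Finite.of_equiv _ Subgroup.topEquiv.toEquiv

lemma card_sdRels_le : Nat.card (PresentedGroup sdRels) ≤ 16 := by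
  obtain ⟨h8, h2, h3⟩ := of_sdRels
  simpa [closure_pair_of_sdRels] using card_closure_le_of_semidihedral h8 h2 h3

end PresentedGroup

theorem closure_pair_semidihedral {G : Type*} [Group G] {r s : G} (hr : orderOf r = 8)
    (hs : s ^ 2 = 1) (hsr : s * r * s⁻¹ = r ^ 3) (hs_notMem : s ∉ zpowers r) :
    Nat.card (closure {r, s}) = 16 ∧ Nonempty (closure {r, s} ≃* PresentedGroup sdRels) := by
  have hr8 : r ^ 8 = 1 := hr ▸ pow_orderOf_eq_one r
  have hrels := lift_eq_one_of_mem_sdRels_iff.mpr ⟨hr8, hs, hsr⟩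
  have hrange : (PresentedGroup.toGroup hrels).range = closure {r, s} := by
    rw [PresentedGroup.range_toGroup, Matrix.range_cons_cons_empty]
  have := finite_closure_of_semidihedral hr8 hs hsr
  have hcard : Nat.card (closure {r, s}) = 16 :=
    (card_closure_le_of_semidihedral hr8 hs hsr).antisymm (sixteen_le_card_closure hr hs_notMem)
  have hbij := (PresentedGroup.toGroup hrels).rangeRestrict_surjective.bijective_of_nat_card_le
    (by rw [hrange, hcard]; exact PresentedGroup.card_sdRels_le)
  exact ⟨hcard, ⟨((MulEquiv.ofBijective _ hbij).trans (MulEquiv.subgroupCongr hrange)).symm⟩⟩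

lemma orderOf_eq_eight_of_pow_four_eq_neg_one {M : Type*} [Monoid M] [HasDistribNeg M] {x : M}
    (hx : x ^ 4 = -1) (h : (-1 : M) ≠ 1) : orderOf x = 8 :=
  orderOf_eq_prime_pow (p := 2) (n := 2) (by norm_num [hx, h])
    (by rw [show 2 ^ (2 + 1) = 4 * 2 by rfl, pow_mul, hx, neg_one_sq])

lemma SemidirectProduct.inr_notMem_zpowers_inl {N H : Type*} [Group N] [Group H]
    {φ : H →* MulAut N} {h : H} (hh : h ≠ 1) (n : N) : inr h ∉ zpowers (inl n : N ⋊[φ] H) := by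
  intro hmem
  have hker : inl n ∈ (rightHom : N ⋊[φ] H →* H).ker := by simp
  exact hh (by simpa using zpowers_le.mpr hker hmem)

lemma WittVector.neg_one_ne_one {p : ℕ} [Fact p.Prime] {k : Type*} [CommRing k]
    (hk : (-1 : k) ≠ 1) : (-1 : WittVector p k) ≠ 1 := fun h =>
  hk (by simpa only [map_neg, map_one] using congrArg WittVector.constantCoeff h)

noncomputable def iwHom : Wq →* Matrix (Fin 2) (Fin 2) Wq where
  toFun := iw
  map_one' := by simp [iw, Matrix.one_fin_two]
  map_mul' x y := by simp [iw]

@[simp]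
lemma iwHom_apply (x : Wq) : iwHom x = iw x := rfl

lemma iwHom_injective : Function.Injective iwHom := fun x y h => by
  simpa [iw] using congrFun (congrFun h 0) 0

lemma φM_iw (x : Wq) : φM (iw x) = iw (σW x) := by
  ext i j
  fin_cases i <;> fin_cases j <;> simp [φM, iw]

/-- in `G = GL₂(W) ⋊ C₂`, the elements `ω` and `φ` satisfy `ω⁸ = 1`,
`φ² = 1` and `φωφ⁻¹ = ω³`, and the subgroup they generate has exactly `16` elements;
it is isomorphic to the semidihedral group `SD₁₆ = ⟨r, s | r⁸ = s² = 1, s r s⁻¹ = r³⟩`. -/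
theorem statement4
    (ω₀ : Wq) (hω₀ : ω₀ ^ 4 = -1) (hσω₀ : σW ω₀ = ω₀ ^ 3)
    (θ : C2 →* MulAut (GL (Fin 2) Wq))
    (hθ : θ (Multiplicative.ofAdd 1) = Units.mapEquiv φM.toMulEquiv)
    (ωu : GL (Fin 2) Wq) (hωu : (ωu : Matrix (Fin 2) (Fin 2) Wq) = iw ω₀)
    (ωG φG : GL (Fin 2) Wq ⋊[θ] C2)
    (hωG : ωG = SemidirectProduct.inl ωu)
    (hφG : φG = SemidirectProduct.inr (Multiplicative.ofAdd 1)) :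
    ωG ^ 8 = 1 ∧ φG ^ 2 = 1 ∧ φG * ωG * φG⁻¹ = ωG ^ 3 ∧
    Nat.card (Subgroup.closure {ωG, φG}) = 16 ∧
    Nonempty ((Subgroup.closure {ωG, φG}) ≃* PresentedGroup sdRels) := by
  have hordωu : orderOf ωu = 8 := by
    rw [← orderOf_units, hωu, ← iwHom_apply, orderOf_injective iwHom iwHom_injective]
    have : Fact (2 < 3) := ⟨by norm_num⟩
    exact orderOf_eq_eight_of_pow_four_eq_neg_one hω₀
      (WittVector.neg_one_ne_one (CharP.neg_one_ne_one F9 3))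
  have hφωu : Units.mapEquiv φM.toMulEquiv ωu = ωu ^ 3 := Units.ext <| by
    change φM ωu = (ωu : Matrix (Fin 2) (Fin 2) Wq) ^ 3
    rw [hωu, φM_iw, hσω₀]
    simpa using map_pow iwHom ω₀ 3
  have hord : orderOf ωG = 8 := by
    rw [hωG, orderOf_injective _ SemidirectProduct.inl_injective, hordωu]
  have hφ2 : φG ^ 2 = 1 := by
    rw [hφG, ← map_pow, show Multiplicative.ofAdd (1 : ZMod 2) ^ 2 = 1 by decide, map_one]
  have hconj : φG * ωG * φG⁻¹ = ωG ^ 3 := by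
    rw [hωG, hφG, ← map_pow, ← hφωu, ← hθ, SemidirectProduct.inl_aut, map_inv]
  have hφ_notMem : φG ∉ zpowers ωG :=
    hφG ▸ hωG ▸ SemidirectProduct.inr_notMem_zpowers_inl (by decide) ωu
  exact ⟨hord ▸ pow_orderOf_eq_one ωG, hφ2, hconj, closure_pair_semidihedral hord hφ2 hconj hφ_notMem⟩
end
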